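/- For the flat distributive law Λ of the double presheaf 2-monad 𝔓𝔓† over the presheaf 2-monad 𝔓 given by Λ_X = y_{PP†X}·((y_X)_†)^!:PP†PX→P(PP†X), there is a 2-isomorphism (Λ,Q)-Alg ≅ Q-Int: lax Λ-algebra structures p:PP†X→PX on a Q-category X correspond bijectively to Q-closure operations on P†X, and lax Λ-homomorphisms correspond exactly to the continuous Q-functors between Q-interior spaces. -/

import Mathlib

/-!
Common framework: quantaloids, `Q`-categories, `Q`-functors, `Q`-distributors,
(co)presheaf constructions, 2-monads on `Q`-Cat, lax distributive laws over the
presheaf 2-monad, and lax extensions to `Q`-Dist.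
-/

set_option autoImplicit false

universe u

namespace QT

/-- A (small) quantaloid: a category enriched in complete lattices, with
composition preserving suprema in each variable. -/
structure Quantaloid : Type (u + 1) where
  Obj : Type u
  Hom : Obj → Obj → Type u
  lat : ∀ a b, CompleteLattice (Hom a b)
  comp : ∀ {a b c}, Hom b c → Hom a b → Hom a c
  idm : ∀ a, Hom a a
  comp_assoc : ∀ {a b c d} (w : Hom c d) (v : Hom b c) (u : Hom a b),
    comp (comp w v) u = comp w (comp v u)
  comp_idm : ∀ {a b} (u : Hom a b), comp u (idm a) = u
  idm_comp : ∀ {a b} (u : Hom a b), comp (idm b) u = u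
  comp_sSup : ∀ {a b c} (v : Hom b c) (S : Set (Hom a b)),
    comp v (sSup S) = ⨆ u ∈ S, comp v u
  sSup_comp : ∀ {a b c} (S : Set (Hom b c)) (u : Hom a b),
    comp (sSup S) u = ⨆ v ∈ S, comp v u

attribute [instance] Quantaloid.lat

namespace Quantaloid

variable {Q : Quantaloid.{u}}

theorem comp_iSup {a b c : Q.Obj} (v : Q.Hom b c) {ι : Sort*} (f : ι → Q.Hom a b) :
    Q.comp v (⨆ i, f i) = ⨆ i, Q.comp v (f i) := by
  rw [iSup, Q.comp_sSup, iSup_range]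

theorem iSup_comp {a b c : Q.Obj} {ι : Sort*} (f : ι → Q.Hom b c) (u : Q.Hom a b) :
    Q.comp (⨆ i, f i) u = ⨆ i, Q.comp (f i) u := by
  rw [iSup, Q.sSup_comp, iSup_range]

theorem comp_le_comp {a b c : Q.Obj} {v v' : Q.Hom b c} {u u' : Q.Hom a b}
    (hv : v ≤ v') (hu : u ≤ u') : Q.comp v u ≤ Q.comp v' u' := by
  have h1 : Q.comp v' u ≤ Q.comp v' u' := by
    have h := Q.comp_sSup v' {u, u'}
    rw [sSup_pair, sup_eq_right.mpr hu] at h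
    rw [h]
    exact le_biSup (fun x => Q.comp v' x) (Set.mem_insert _ _)
  have h2 : Q.comp v u ≤ Q.comp v' u := by
    have h := Q.sSup_comp {v, v'} u
    rw [sSup_pair, sup_eq_right.mpr hv] at h
    rw [h]
    exact le_biSup (fun x => Q.comp x u) (Set.mem_insert _ _)
  exact le_trans h2 h1

/-- Internal hom `w ↙ u` (right adjoint to `- ∘ u`). -/
def lda {a b c : Q.Obj} (w : Q.Hom a c) (u : Q.Hom a b) : Q.Hom b c :=
  sSup {v | Q.comp v u ≤ w}

/-- Internal hom `v ↘ w` (right adjoint to `v ∘ -`). -/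
def rda {a b c : Q.Obj} (v : Q.Hom b c) (w : Q.Hom a c) : Q.Hom a b :=
  sSup {u | Q.comp v u ≤ w}

theorem le_lda {a b c : Q.Obj} {v : Q.Hom b c} {u : Q.Hom a b} {w : Q.Hom a c} :
    Q.comp v u ≤ w ↔ v ≤ lda w u := by
  constructor
  · exact fun h => le_sSup h
  · intro h
    calc Q.comp v u ≤ Q.comp (lda w u) u := comp_le_comp h le_rfl
      _ ≤ w := by
          rw [lda, Q.sSup_comp]; exact iSup₂_le fun v' hv' => hv'

theorem le_rda {a b c : Q.Obj} {v : Q.Hom b c} {u : Q.Hom a b} {w : Q.Hom a c} :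
    Q.comp v u ≤ w ↔ u ≤ rda v w := by
  constructor
  · exact fun h => le_sSup h
  · intro h
    calc Q.comp v u ≤ Q.comp v (rda v w) := comp_le_comp le_rfl h
      _ ≤ w := by
          rw [rda, Q.comp_sSup]; exact iSup₂_le fun u' hu' => hu'

end Quantaloid

variable {Q : Quantaloid.{u}}

/-- `Q`-relations between families of sets indexed by the objects of `Q`
(i.e. sets over `ob Q`, presented fibrewise). -/
abbrev QRel (Q : Quantaloid.{u}) (X Y : Q.Obj → Type u) : Type u :=
  ∀ p q, X p → Y q → Q.Hom p q

/-- Composition of `Q`-relations. -/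
def QRel.comp {X Y Z : Q.Obj → Type u} (ψ : QRel Q Y Z) (φ : QRel Q X Y) : QRel Q X Z :=
  fun p r x z => ⨆ q, ⨆ y : Y q, Q.comp (ψ q r y z) (φ p q x y)

theorem QRel.comp_mono {X Y Z : Q.Obj → Type u} {ψ ψ' : QRel Q Y Z} {φ φ' : QRel Q X Y}
    (h1 : ψ ≤ ψ') (h2 : φ ≤ φ') : QRel.comp ψ φ ≤ QRel.comp ψ' φ' := by
  intro p r x z
  exact iSup_mono fun q => iSup_mono fun y =>
    Quantaloid.comp_le_comp (h1 q r y z) (h2 p q x y)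

theorem QRel.comp_assoc {W X Y Z : Q.Obj → Type u}
    (χ : QRel Q Y Z) (ψ : QRel Q X Y) (φ : QRel Q W X) :
    QRel.comp (QRel.comp χ ψ) φ = QRel.comp χ (QRel.comp ψ φ) := by
  funext p s w z
  simp only [QRel.comp, Quantaloid.iSup_comp, Quantaloid.comp_iSup]
  apply le_antisymm
  · exact iSup₂_le fun q x => iSup₂_le fun r y =>
      le_iSup_of_le r (le_iSup_of_le y (le_iSup_of_le q (le_iSup_of_le x
        (Q.comp_assoc _ _ _).le)))
  · exact iSup₂_le fun r y => iSup₂_le fun q x =>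
      le_iSup_of_le q (le_iSup_of_le x (le_iSup_of_le r (le_iSup_of_le y
        (Q.comp_assoc _ _ _).ge)))

/-- A (small) `Q`-category. -/
structure QCat (Q : Quantaloid.{u}) : Type (u + 1) where
  el : Q.Obj → Type u
  hom : QRel Q el el
  refl : ∀ p (x : el p), Q.idm p ≤ hom p p x x
  trans : QRel.comp hom hom ≤ hom

/-- Pointwise transitivity in a `Q`-category. -/
theorem QCat.hom_comp_le (X : QCat Q) {p q r : Q.Obj}
    (x : X.el p) (y : X.el q) (z : X.el r) :
    Q.comp (X.hom q r y z) (X.hom p q x y) ≤ X.hom p r x z :=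
  le_trans
    (le_iSup_of_le q (le_iSup (fun y' : X.el q => Q.comp (X.hom q r y' z) (X.hom p q x y')) y))
    (X.trans p r x z)

/-- Any `Q`-relation into a `Q`-category embeds into its post-composite with the hom. -/
theorem QRel.le_hom_comp {W : Q.Obj → Type u} {Z : QCat Q} (ρ : QRel Q W Z.el) :
    ρ ≤ QRel.comp Z.hom ρ := by
  intro p q x z
  calc ρ p q x z = Q.comp (Q.idm q) (ρ p q x z) := (Q.idm_comp _).symm
    _ ≤ Q.comp (Z.hom q q z z) (ρ p q x z) := Quantaloid.comp_le_comp (Z.refl q z) le_rfl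
    _ ≤ _ := le_iSup_of_le q
        (le_iSup (fun z' : Z.el q => Q.comp (Z.hom q q z' z) (ρ p q x z')) z)

/-- Any `Q`-relation out of a `Q`-category embeds into its pre-composite with the hom. -/
theorem QRel.le_comp_hom {X : QCat Q} {W : Q.Obj → Type u} (ρ : QRel Q X.el W) :
    ρ ≤ QRel.comp ρ X.hom := by
  intro p q x z
  calc ρ p q x z = Q.comp (ρ p q x z) (Q.idm p) := (Q.comp_idm _).symm
    _ ≤ Q.comp (ρ p q x z) (X.hom p p x x) := Quantaloid.comp_le_comp le_rfl (X.refl p x)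
    _ ≤ _ := le_iSup_of_le p
        (le_iSup (fun x' : X.el p => Q.comp (ρ p q x' z) (X.hom p p x x')) x)

/-- A `Q`-functor. -/
structure QFun (X Y : QCat Q) : Type u where
  app : ∀ p, X.el p → Y.el p
  mono : ∀ p q (x : X.el p) (x' : X.el q),
    X.hom p q x x' ≤ Y.hom p q (app p x) (app q x')

def QFun.id (X : QCat Q) : QFun X X :=
  ⟨fun _ x => x, fun _ _ _ _ => le_rfl⟩

def QFun.comp {X Y Z : QCat Q} (g : QFun Y Z) (f : QFun X Y) : QFun X Z :=
  ⟨fun p x => g.app p (f.app p x),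
   fun p q x x' => le_trans (f.mono p q x x') (g.mono p q (f.app p x) (f.app q x'))⟩

/-- The (pointwise) order of `Q`-functors. -/
instance {X Y : QCat Q} : Preorder (QFun X Y) where
  le f g := ∀ p (x : X.el p), Q.idm p ≤ Y.hom p p (f.app p x) (g.app p x)
  le_refl f p x := Y.refl p (f.app p x)
  le_trans f g h h1 h2 := by
    intro p x
    calc Q.idm p = Q.comp (Q.idm p) (Q.idm p) := (Q.comp_idm _).symm
      _ ≤ Q.comp (Y.hom p p (g.app p x) (h.app p x)) (Y.hom p p (f.app p x) (g.app p x)) :=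
          Quantaloid.comp_le_comp (h2 p x) (h1 p x)
      _ ≤ Y.hom p p (f.app p x) (h.app p x) := Y.hom_comp_le _ _ _

/-- A `Q`-distributor between `Q`-categories. -/
structure QDist (X Y : QCat Q) : Type u where
  rel : QRel Q X.el Y.el
  compat : QRel.comp Y.hom (QRel.comp rel X.hom) ≤ rel

instance {X Y : QCat Q} : PartialOrder (QDist X Y) where
  le φ ψ := φ.rel ≤ ψ.rel
  le_refl φ := le_refl φ.rel
  le_trans _ _ _ h h' := by
    intro p q x y
    exact le_trans (h p q x y) (h' p q x y)
  le_antisymm φ ψ h h' := by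
    have hr : φ.rel = ψ.rel := le_antisymm h h'
    cases φ; cases ψ; cases hr; rfl

theorem QDist.hom_comp_le {X Y : QCat Q} (φ : QDist X Y) :
    QRel.comp Y.hom φ.rel ≤ φ.rel :=
  le_trans (QRel.comp_mono le_rfl (QRel.le_comp_hom φ.rel)) φ.compat

theorem QDist.comp_hom_le {X Y : QCat Q} (φ : QDist X Y) :
    QRel.comp φ.rel X.hom ≤ φ.rel :=
  le_trans (QRel.le_hom_comp _) φ.compat

theorem QDist.rel_comp_hom {X Y : QCat Q} (φ : QDist X Y) {p q r : Q.Obj}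
    (x : X.el p) (x' : X.el q) (y : Y.el r) :
    Q.comp (φ.rel q r x' y) (X.hom p q x x') ≤ φ.rel p r x y :=
  le_trans
    (le_iSup_of_le q (le_iSup (fun x'' : X.el q => Q.comp (φ.rel q r x'' y) (X.hom p q x x'')) x'))
    (φ.comp_hom_le p r x y)

theorem QDist.hom_comp_rel {X Y : QCat Q} (φ : QDist X Y) {p q r : Q.Obj}
    (x : X.el p) (y : Y.el q) (y' : Y.el r) :
    Q.comp (Y.hom q r y y') (φ.rel p q x y) ≤ φ.rel p r x y' :=
  le_trans
    (le_iSup_of_le q (le_iSup (fun y'' : Y.el q => Q.comp (Y.hom q r y'' y') (φ.rel p q x y'')) y))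
    (φ.hom_comp_le p r x y')

/-- Composition of `Q`-distributors. -/
def QDist.comp {X Y Z : QCat Q} (ψ : QDist Y Z) (φ : QDist X Y) : QDist X Z :=
  ⟨QRel.comp ψ.rel φ.rel, by
    calc QRel.comp Z.hom (QRel.comp (QRel.comp ψ.rel φ.rel) X.hom)
        = QRel.comp (QRel.comp Z.hom ψ.rel) (QRel.comp φ.rel X.hom) := by
          rw [QRel.comp_assoc, QRel.comp_assoc]
      _ ≤ QRel.comp ψ.rel φ.rel :=
          QRel.comp_mono ψ.hom_comp_le φ.comp_hom_le⟩

/-- The identity distributor `1_X^*` on a `Q`-category. -/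
def QCat.homDist (X : QCat Q) : QDist X X :=
  ⟨X.hom, le_trans (QRel.comp_mono le_rfl X.trans) X.trans⟩

/-- The graph `f_*` of a `Q`-functor. -/
def QFun.graph {X Y : QCat Q} (f : QFun X Y) : QDist X Y :=
  ⟨fun p q x y => Y.hom p q (f.app p x) y, by
    intro p q x y
    simp only [QRel.comp, Quantaloid.comp_iSup, Quantaloid.iSup_comp]
    refine iSup₂_le fun q' y' => iSup₂_le fun p' x' => ?_
    calc Q.comp (Y.hom q' q y' y) (Q.comp (Y.hom p' q' (f.app p' x') y') (X.hom p p' x x'))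
        ≤ Q.comp (Y.hom q' q y' y)
            (Q.comp (Y.hom p' q' (f.app p' x') y') (Y.hom p p' (f.app p x) (f.app p' x'))) :=
          Quantaloid.comp_le_comp le_rfl
            (Quantaloid.comp_le_comp le_rfl (f.mono p p' x x'))
      _ ≤ Q.comp (Y.hom q' q y' y) (Y.hom p q' (f.app p x) y') :=
          Quantaloid.comp_le_comp le_rfl (Y.hom_comp_le _ _ _)
      _ ≤ Y.hom p q (f.app p x) y := Y.hom_comp_le _ _ _⟩

/-- The cograph `f^*` of a `Q`-functor. -/
def QFun.cograph {X Y : QCat Q} (f : QFun X Y) : QDist Y X :=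
  ⟨fun p q y x => Y.hom p q y (f.app q x), by
    intro p q y x
    simp only [QRel.comp, Quantaloid.comp_iSup, Quantaloid.iSup_comp]
    refine iSup₂_le fun q' x' => iSup₂_le fun p' y' => ?_
    calc Q.comp (X.hom q' q x' x) (Q.comp (Y.hom p' q' y' (f.app q' x')) (Y.hom p p' y y'))
        ≤ Q.comp (Y.hom q' q (f.app q' x') (f.app q x))
            (Q.comp (Y.hom p' q' y' (f.app q' x')) (Y.hom p p' y y')) :=
          Quantaloid.comp_le_comp (f.mono q' q x' x) le_rfl
      _ ≤ Q.comp (Y.hom q' q (f.app q' x') (f.app q x)) (Y.hom p q' y (f.app q' x')) :=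
          Quantaloid.comp_le_comp le_rfl (Y.hom_comp_le _ _ _)
      _ ≤ Y.hom p q y (f.app q x) := Y.hom_comp_le _ _ _⟩

/-- The presheaf `Q`-category `P X`. -/
def QCat.P (X : QCat Q) : QCat Q where
  el s := { σ : ∀ p, X.el p → Q.Hom p s //
    ∀ p q (x : X.el p) (x' : X.el q), Q.comp (σ q x') (X.hom p q x x') ≤ σ p x }
  hom s s' σ σ' := ⨅ p, ⨅ x : X.el p, Quantaloid.lda (σ'.1 p x) (σ.1 p x)
  refl := by
    intro s σ
    refine le_iInf fun p => le_iInf fun x => Quantaloid.le_lda.mp ?_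
    rw [Q.idm_comp]
  trans := by
    intro s s'' σ σ''
    refine iSup₂_le fun s' σ' => ?_
    refine le_iInf fun p => le_iInf fun x => Quantaloid.le_lda.mp ?_
    rw [Q.comp_assoc]
    have h1 : Q.comp (⨅ p', ⨅ x' : X.el p', Quantaloid.lda (σ'.1 p' x') (σ.1 p' x'))
        (σ.1 p x) ≤ σ'.1 p x :=
      Quantaloid.le_lda.mpr (le_trans (iInf_le _ p) (iInf_le _ x))
    have h2 : Q.comp (⨅ p', ⨅ x' : X.el p', Quantaloid.lda (σ''.1 p' x') (σ'.1 p' x'))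
        (σ'.1 p x) ≤ σ''.1 p x :=
      Quantaloid.le_lda.mpr (le_trans (iInf_le _ p) (iInf_le _ x))
    exact le_trans (Quantaloid.comp_le_comp le_rfl h1) h2

/-- The copresheaf `Q`-category `P† X`. -/
def QCat.Pd (X : QCat Q) : QCat Q where
  el s := { τ : ∀ q, X.el q → Q.Hom s q //
    ∀ p q (x : X.el p) (x' : X.el q), Q.comp (X.hom p q x x') (τ p x) ≤ τ q x' }
  hom s s' τ τ' := ⨅ q, ⨅ x : X.el q, Quantaloid.rda (τ'.1 q x) (τ.1 q x)
  refl := by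
    intro s τ
    refine le_iInf fun q => le_iInf fun x => Quantaloid.le_rda.mp ?_
    rw [Q.comp_idm]
  trans := by
    intro s s'' τ τ''
    refine iSup₂_le fun s' τ' => ?_
    refine le_iInf fun q => le_iInf fun x => Quantaloid.le_rda.mp ?_
    rw [← Q.comp_assoc]
    have h1 : Q.comp (τ''.1 q x)
        (⨅ q', ⨅ x' : X.el q', Quantaloid.rda (τ''.1 q' x') (τ'.1 q' x')) ≤ τ'.1 q x :=
      Quantaloid.le_rda.mpr (le_trans (iInf_le _ q) (iInf_le _ x))
    have h2 : Q.comp (τ'.1 q x)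
        (⨅ q', ⨅ x' : X.el q', Quantaloid.rda (τ'.1 q' x') (τ.1 q' x')) ≤ τ.1 q x :=
      Quantaloid.le_rda.mpr (le_trans (iInf_le _ q) (iInf_le _ x))
    exact le_trans (Quantaloid.comp_le_comp h1 le_rfl) h2

/-- The Yoneda embedding `y_X : X → P X`. -/
def QCat.y (X : QCat Q) : QFun X X.P where
  app p x := ⟨fun q x' => X.hom q p x' x,
    fun p' q' x1 x2 => X.hom_comp_le x1 x2 x⟩
  mono := by
    intro p q x x'
    refine le_iInf fun r => le_iInf fun x'' => Quantaloid.le_lda.mp ?_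
    exact X.hom_comp_le x'' x x'

/-- The co-Yoneda embedding `y†_X : X → P† X`. -/
def QCat.yd (X : QCat Q) : QFun X X.Pd where
  app p x := ⟨fun q x' => X.hom p q x x',
    fun p' q' x1 x2 => X.hom_comp_le x x1 x2⟩
  mono := by
    intro p q x x'
    refine le_iInf fun r => le_iInf fun x'' => Quantaloid.le_rda.mp ?_
    exact X.hom_comp_le x x' x''

/-- `φ^→ : P Y → P X`, `τ ↦ τ ∘ φ`. -/
def QDist.fwd {X Y : QCat Q} (φ : QDist X Y) : QFun Y.P X.P where
  app s τ := ⟨fun p x => ⨆ q, ⨆ y : Y.el q, Q.comp (τ.1 q y) (φ.rel p q x y), by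
    intro p q x x'
    rw [Quantaloid.iSup_comp]
    refine iSup_le fun r => ?_
    rw [Quantaloid.iSup_comp]
    refine iSup_le fun y => ?_
    rw [Q.comp_assoc]
    exact le_iSup_of_le r (le_iSup_of_le y
      (Quantaloid.comp_le_comp le_rfl (φ.rel_comp_hom x x' y)))⟩
  mono := by
    intro s s' τ τ'
    refine le_iInf fun p => le_iInf fun x => Quantaloid.le_lda.mp ?_
    rw [Quantaloid.comp_iSup]
    refine iSup_le fun r => ?_
    rw [Quantaloid.comp_iSup]
    refine iSup_le fun y => ?_
    rw [← Q.comp_assoc]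
    have h : Q.comp (Y.P.hom s s' τ τ') (τ.1 r y) ≤ τ'.1 r y :=
      Quantaloid.le_lda.mpr (le_trans (iInf_le _ r) (iInf_le _ y))
    exact le_iSup_of_le r (le_iSup_of_le y (Quantaloid.comp_le_comp h le_rfl))

/-- `φ^↞ : P† X → P† Y`, `σ ↦ φ ∘ σ`. -/
def QDist.bwd {X Y : QCat Q} (φ : QDist X Y) : QFun X.Pd Y.Pd where
  app s σ := ⟨fun q y => ⨆ p, ⨆ x : X.el p, Q.comp (φ.rel p q x y) (σ.1 p x), by
    intro p q y y'
    rw [Quantaloid.comp_iSup]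
    refine iSup_le fun r => ?_
    rw [Quantaloid.comp_iSup]
    refine iSup_le fun x => ?_
    rw [← Q.comp_assoc]
    exact le_iSup_of_le r (le_iSup_of_le x
      (Quantaloid.comp_le_comp (φ.hom_comp_rel x y y') le_rfl))⟩
  mono := by
    intro s s' σ σ'
    refine le_iInf fun q => le_iInf fun y => Quantaloid.le_rda.mp ?_
    rw [Quantaloid.iSup_comp]
    refine iSup_le fun r => ?_
    rw [Quantaloid.iSup_comp]
    refine iSup_le fun x => ?_
    rw [Q.comp_assoc]
    have h : Q.comp (σ'.1 r x) (X.Pd.hom s s' σ σ') ≤ σ.1 r x :=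
      Quantaloid.le_rda.mpr (le_trans (iInf_le _ r) (iInf_le _ x))
    exact le_iSup_of_le r (le_iSup_of_le x (Quantaloid.comp_le_comp le_rfl h))

/-- `φ_→ : P X → P Y`, `σ ↦ σ ↙ φ`. -/
def QDist.fwdr {X Y : QCat Q} (φ : QDist X Y) : QFun X.P Y.P where
  app s σ := ⟨fun q y => ⨅ p, ⨅ x : X.el p, Quantaloid.lda (σ.1 p x) (φ.rel p q x y), by
    intro q q' y y'
    refine le_iInf fun p => le_iInf fun x => Quantaloid.le_lda.mp ?_
    rw [Q.comp_assoc]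
    have h1 : Q.comp (Y.hom q q' y y') (φ.rel p q x y) ≤ φ.rel p q' x y' :=
      φ.hom_comp_rel x y y'
    have h2 : Q.comp ((⨅ p', ⨅ x' : X.el p',
        Quantaloid.lda (σ.1 p' x') (φ.rel p' q' x' y')) : Q.Hom q' s) (φ.rel p q' x y')
        ≤ σ.1 p x :=
      Quantaloid.le_lda.mpr (le_trans (iInf_le _ p) (iInf_le _ x))
    exact le_trans (Quantaloid.comp_le_comp le_rfl h1) h2⟩
  mono := by
    intro s s' σ σ'
    refine le_iInf fun q => le_iInf fun y => Quantaloid.le_lda.mp ?_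
    refine le_iInf fun p => le_iInf fun x => Quantaloid.le_lda.mp ?_
    rw [Q.comp_assoc]
    have h1 : Q.comp ((⨅ p', ⨅ x' : X.el p',
        Quantaloid.lda (σ.1 p' x') (φ.rel p' q x' y)) : Q.Hom q s) (φ.rel p q x y)
        ≤ σ.1 p x :=
      Quantaloid.le_lda.mpr (le_trans (iInf_le _ p) (iInf_le _ x))
    have h2 : Q.comp (X.P.hom s s' σ σ') (σ.1 p x) ≤ σ'.1 p x :=
      Quantaloid.le_lda.mpr (le_trans (iInf_le _ p) (iInf_le _ x))
    exact le_trans (Quantaloid.comp_le_comp le_rfl h1) h2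

/-- Isbell `φ↑ : P X → P† Y`, `σ ↦ φ ↙ σ`. -/
def QDist.up {X Y : QCat Q} (φ : QDist X Y) : QFun X.P Y.Pd where
  app s σ := ⟨fun q y => ⨅ p, ⨅ x : X.el p, Quantaloid.lda (φ.rel p q x y) (σ.1 p x), by
    intro q q' y y'
    refine le_iInf fun p => le_iInf fun x => Quantaloid.le_lda.mp ?_
    rw [Q.comp_assoc]
    have h1 : Q.comp ((⨅ p', ⨅ x' : X.el p',
        Quantaloid.lda (φ.rel p' q x' y) (σ.1 p' x')) : Q.Hom s q) (σ.1 p x)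
        ≤ φ.rel p q x y :=
      Quantaloid.le_lda.mpr (le_trans (iInf_le _ p) (iInf_le _ x))
    exact le_trans (Quantaloid.comp_le_comp le_rfl h1) (φ.hom_comp_rel x y y')⟩
  mono := by
    intro s s' σ σ'
    refine le_iInf fun q => le_iInf fun y => Quantaloid.le_rda.mp ?_
    refine le_iInf fun p => le_iInf fun x => Quantaloid.le_lda.mp ?_
    rw [Q.comp_assoc]
    have h1 : Q.comp (X.P.hom s s' σ σ') (σ.1 p x) ≤ σ'.1 p x :=
      Quantaloid.le_lda.mpr (le_trans (iInf_le _ p) (iInf_le _ x))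
    have h2 : Q.comp ((⨅ p', ⨅ x' : X.el p',
        Quantaloid.lda (φ.rel p' q x' y) (σ'.1 p' x')) : Q.Hom s' q) (σ'.1 p x)
        ≤ φ.rel p q x y :=
      Quantaloid.le_lda.mpr (le_trans (iInf_le _ p) (iInf_le _ x))
    exact le_trans (Quantaloid.comp_le_comp le_rfl h1) h2

/-- Isbell `φ↓ : P† Y → P X`, `τ ↦ τ ↘ φ`. -/
def QDist.down {X Y : QCat Q} (φ : QDist X Y) : QFun Y.Pd X.P where
  app s τ := ⟨fun p x => ⨅ q, ⨅ y : Y.el q, Quantaloid.rda (τ.1 q y) (φ.rel p q x y), by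
    intro p p' x x'
    refine le_iInf fun q => le_iInf fun y => Quantaloid.le_rda.mp ?_
    rw [← Q.comp_assoc]
    have h1 : Q.comp (τ.1 q y) ((⨅ q', ⨅ y' : Y.el q',
        Quantaloid.rda (τ.1 q' y') (φ.rel p' q' x' y')) : Q.Hom p' s)
        ≤ φ.rel p' q x' y :=
      Quantaloid.le_rda.mpr (le_trans (iInf_le _ q) (iInf_le _ y))
    exact le_trans (Quantaloid.comp_le_comp h1 le_rfl) (φ.rel_comp_hom x x' y)⟩
  mono := by
    intro s s' τ τ'
    refine le_iInf fun p => le_iInf fun x => Quantaloid.le_lda.mp ?_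
    refine le_iInf fun q => le_iInf fun y => Quantaloid.le_rda.mp ?_
    rw [← Q.comp_assoc]
    have h1 : Q.comp (τ'.1 q y) (Y.Pd.hom s s' τ τ') ≤ τ.1 q y :=
      Quantaloid.le_rda.mpr (le_trans (iInf_le _ q) (iInf_le _ y))
    have h2 : Q.comp (τ.1 q y) ((⨅ q', ⨅ y' : Y.el q',
        Quantaloid.rda (τ.1 q' y') (φ.rel p q' x y')) : Q.Hom p s)
        ≤ φ.rel p q x y :=
      Quantaloid.le_rda.mpr (le_trans (iInf_le _ q) (iInf_le _ y))
    exact le_trans (Quantaloid.comp_le_comp h1 le_rfl) h2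

/-- The transpose `←φ : Y → P X` of a distributor `φ : X ⇸ Y`. -/
def QDist.transpose {X Y : QCat Q} (φ : QDist X Y) : QFun Y X.P where
  app q y := ⟨fun p x => φ.rel p q x y,
    fun p q' x x' => φ.rel_comp_hom x x' y⟩
  mono := by
    intro q q' y y'
    refine le_iInf fun p => le_iInf fun x => Quantaloid.le_lda.mp ?_
    exact φ.hom_comp_rel x y y'

/-- The inverse of transposition. -/
def QFun.untranspose {X Y : QCat Q} (g : QFun Y X.P) : QDist X Y :=
  ⟨fun p q x y => (g.app q y).1 p x, by
    intro p q x y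
    simp only [QRel.comp, Quantaloid.comp_iSup, Quantaloid.iSup_comp]
    refine iSup₂_le fun q' y' => iSup₂_le fun p' x' => ?_
    have h1 : Q.comp ((g.app q' y').1 p' x') (X.hom p p' x x') ≤ (g.app q' y').1 p x :=
      (g.app q' y').2 p p' x x'
    have h2 : Q.comp (Y.hom q' q y' y) ((g.app q' y').1 p x) ≤ (g.app q y).1 p x :=
      Quantaloid.le_lda.mpr
        (le_trans (g.mono q' q y' y) (le_trans (iInf_le _ p) (iInf_le _ x)))
    exact le_trans (Quantaloid.comp_le_comp le_rfl h1) h2⟩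

/-- `f_! := (f^*)^→ : P X → P Y`. -/
def pshf {X Y : QCat Q} (f : QFun X Y) : QFun X.P Y.P := f.cograph.fwd

/-- `f^! := (f_*)^→ : P Y → P X`. -/
def pshb {X Y : QCat Q} (f : QFun X Y) : QFun Y.P X.P := f.graph.fwd

/-- `f_† := (f_*)^↞ : P† X → P† Y`. -/
def cpsf {X Y : QCat Q} (f : QFun X Y) : QFun X.Pd Y.Pd := f.graph.bwd

/-- `f^† := (f^*)^↞ : P† Y → P† X`. -/
def cpsb {X Y : QCat Q} (f : QFun X Y) : QFun Y.Pd X.Pd := f.cograph.bwd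

/-- `sup_{P X} = y_X^! : P P X → P X`: the multiplication of the presheaf 2-monad. -/
def supP (X : QCat Q) : QFun X.P.P X.P := pshb X.y

/-- `inf_{P† X} = (y†_X)^† : P† P† X → P† X`: the multiplication of the copresheaf
2-monad. -/
def infPd (X : QCat Q) : QFun X.Pd.Pd X.Pd := cpsb X.yd

/-- Adjunction `f ⊣ g` in `Q`-Cat. -/
def QAdj {X Y : QCat Q} (f : QFun X Y) (g : QFun Y X) : Prop :=
  QFun.id X ≤ g.comp f ∧ f.comp g ≤ QFun.id Y

/-- Fully faithful `Q`-functors. -/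
def QFun.FullyFaithful {X Y : QCat Q} (f : QFun X Y) : Prop :=
  ∀ p q (x : X.el p) (x' : X.el q), X.hom p q x x' = Y.hom p q (f.app p x) (f.app q x')

/-- A `Q`-closure operation on a `Q`-category. -/
def IsClosureOp (Z : QCat Q) (c : QFun Z Z) : Prop :=
  QFun.id Z ≤ c ∧ c.comp c = c

/-- A 2-functor on `Q`-Cat. -/
structure TwoFunctor (Q : Quantaloid.{u}) : Type (u + 1) where
  obj : QCat Q → QCat Q
  map : ∀ {X Y : QCat Q}, QFun X Y → QFun (obj X) (obj Y)
  map_id : ∀ X : QCat Q, map (QFun.id X) = QFun.id (obj X)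
  map_comp : ∀ {X Y Z : QCat Q} (g : QFun Y Z) (f : QFun X Y),
    map (g.comp f) = (map g).comp (map f)
  map_mono : ∀ {X Y : QCat Q} {f g : QFun X Y}, f ≤ g → map f ≤ map g

/-- A 2-monad on `Q`-Cat. -/
structure TwoMonad (Q : Quantaloid.{u}) extends TwoFunctor Q where
  unit : ∀ X : QCat Q, QFun X (obj X)
  mult : ∀ X : QCat Q, QFun (obj (obj X)) (obj X)
  unit_nat : ∀ {X Y : QCat Q} (f : QFun X Y), (unit Y).comp f = (map f).comp (unit X)
  mult_nat : ∀ {X Y : QCat Q} (f : QFun X Y),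
    (mult Y).comp (map (map f)) = (map f).comp (mult X)
  mult_unit : ∀ X : QCat Q, (mult X).comp (unit (obj X)) = QFun.id (obj X)
  mult_map_unit : ∀ X : QCat Q, (mult X).comp (map (unit X)) = QFun.id (obj X)
  mult_assoc : ∀ X : QCat Q, (mult X).comp (map (mult X)) = (mult X).comp (mult (obj X))

/-- The type of families `λ_X : T P X → P T X`. -/
abbrev LamFamily (T : TwoFunctor Q) : Type (u + 1) :=
  ∀ X : QCat Q, QFun (T.obj X.P) ((T.obj X).P)

/-- Lax naturality law (a): `(Tf)_! ∘ λ_X ≤ λ_Y ∘ T(f_!)`. -/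
def LawA (T : TwoFunctor Q) (lam : LamFamily T) : Prop :=
  ∀ (X Y : QCat Q) (f : QFun X Y),
    (pshf (T.map f)).comp (lam X) ≤ (lam Y).comp (T.map (pshf f))

/-- Lax `P`-unit law (b): `y_{TX} ≤ λ_X ∘ T y_X`. -/
def LawB (T : TwoFunctor Q) (lam : LamFamily T) : Prop :=
  ∀ X : QCat Q, QCat.y (T.obj X) ≤ (lam X).comp (T.map X.y)

/-- The `P`-unit law (b) holding strictly (flatness). -/
def LawBstrict (T : TwoFunctor Q) (lam : LamFamily T) : Prop :=
  ∀ X : QCat Q, (lam X).comp (T.map X.y) = QCat.y (T.obj X)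

/-- Lax `P`-multiplication law (c): `s_{TX} ∘ (λ_X)_! ∘ λ_{PX} ≤ λ_X ∘ T s_X`. -/
def LawC (T : TwoFunctor Q) (lam : LamFamily T) : Prop :=
  ∀ X : QCat Q,
    (supP (T.obj X)).comp ((pshf (lam X)).comp (lam X.P)) ≤ (lam X).comp (T.map (supP X))

/-- Lax `T`-unit law (d): `(e_X)_! ≤ λ_X ∘ e_{PX}`. -/
def LawD (M : TwoMonad Q) (lam : LamFamily M.toTwoFunctor) : Prop :=
  ∀ X : QCat Q, pshf (M.unit X) ≤ (lam X).comp (M.unit X.P)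

/-- Lax `T`-multiplication law (e): `(m_X)_! ∘ λ_{TX} ∘ T λ_X ≤ λ_X ∘ m_{PX}`. -/
def LawE (M : TwoMonad Q) (lam : LamFamily M.toTwoFunctor) : Prop :=
  ∀ X : QCat Q,
    (pshf (M.mult X)).comp ((lam (M.obj X)).comp (M.map (lam X))) ≤ (lam X).comp (M.mult X.P)

def IsDistLawABC (T : TwoFunctor Q) (lam : LamFamily T) : Prop :=
  LawA T lam ∧ LawB T lam ∧ LawC T lam

/-- A (lax) distributive law of the 2-monad `M` over the presheaf 2-monad. -/
def IsDistLaw (M : TwoMonad Q) (lam : LamFamily M.toTwoFunctor) : Prop :=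
  IsDistLawABC M.toTwoFunctor lam ∧ LawD M lam ∧ LawE M lam

/-- A flat distributive law: (b) holds strictly. -/
def IsFlatDistLaw (M : TwoMonad Q) (lam : LamFamily M.toTwoFunctor) : Prop :=
  IsDistLaw M lam ∧ LawBstrict M.toTwoFunctor lam

/-- Lax `λ`-algebra: laws (f) and (g). -/
def IsLaxAlg (M : TwoMonad Q) (lam : LamFamily M.toTwoFunctor) (X : QCat Q)
    (p : QFun (M.obj X) X.P) : Prop :=
  X.y ≤ p.comp (M.unit X) ∧
  (supP X).comp ((pshf p).comp ((lam X).comp (M.map p))) ≤ p.comp (M.mult X)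

/-- Lax `λ`-homomorphism: law (h). -/
def IsLaxHom (M : TwoMonad Q) {X Y : QCat Q}
    (p : QFun (M.obj X) X.P) (q : QFun (M.obj Y) Y.P) (f : QFun X Y) : Prop :=
  (pshf f).comp p ≤ q.comp (M.map f)

/-- The type of families `T̂φ : TX ⇸ TY`, one for each `φ : X ⇸ Y`. -/
abbrev ExtFamily (T : TwoFunctor Q) : Type (u + 1) :=
  ∀ ⦃X Y : QCat Q⦄, QDist X Y → QDist (T.obj X) (T.obj Y)

/-- A lax extension of the 2-functor `T` to `Q`-Dist: conditions (1), (2), (3). -/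
def IsLaxExt (T : TwoFunctor Q) (ext : ExtFamily T) : Prop :=
  (∀ (X Y : QCat Q) (φ φ' : QDist X Y), φ ≤ φ' → ext φ ≤ ext φ') ∧
  (∀ (X Y Z : QCat Q) (φ : QDist X Y) (ψ : QDist Y Z), (ext ψ).comp (ext φ) ≤ ext (ψ.comp φ)) ∧
  (∀ (X Y : QCat Q) (f : QFun X Y),
    (T.map f).graph ≤ ext f.graph ∧ (T.map f).cograph ≤ ext f.cograph)

/-- Condition (4): `φ ∘ e_X^* ≤ e_Y^* ∘ T̂φ`. -/
def ExtLaw4 (M : TwoMonad Q) (ext : ExtFamily M.toTwoFunctor) : Prop :=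
  ∀ (X Y : QCat Q) (φ : QDist X Y),
    φ.comp (M.unit X).cograph ≤ ((M.unit Y).cograph).comp (ext φ)

/-- Condition (5): `T̂T̂φ ∘ m_X^* ≤ m_Y^* ∘ T̂φ`. -/
def ExtLaw5 (M : TwoMonad Q) (ext : ExtFamily M.toTwoFunctor) : Prop :=
  ∀ (X Y : QCat Q) (φ : QDist X Y),
    (ext (ext φ)).comp (M.mult X).cograph ≤ ((M.mult Y).cograph).comp (ext φ)

/-- A lax extension of the 2-monad `M` to `Q`-Dist. -/
def IsMonadLaxExt (M : TwoMonad Q) (ext : ExtFamily M.toTwoFunctor) : Prop :=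
  IsLaxExt M.toTwoFunctor ext ∧ ExtLaw4 M ext ∧ ExtLaw5 M ext

/-- Flatness of a lax extension: `T̂ 1_X^* = 1_{TX}^*`. -/
def FlatExt (T : TwoFunctor Q) (ext : ExtFamily T) : Prop :=
  ∀ X : QCat Q, ext X.homDist = (T.obj X).homDist

/-- From a lax distributive law to a lax extension: `←(T̂φ) = λ_X ∘ T(←φ)`. -/
def PhiExt (T : TwoFunctor Q) (lam : LamFamily T) : ExtFamily T :=
  fun X Y φ => QFun.untranspose ((lam X).comp (T.map φ.transpose))

/-- From a lax extension to a lax distributive law: `λ_X = ←(T̂((y_X)_*))`. -/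
def PsiLam (T : TwoFunctor Q) (ext : ExtFamily T) : LamFamily T :=
  fun X => (ext X.y.graph).transpose

/-- The canonical lax extension `T̂φ = (T ←φ)^* ∘ (T y_X)_*`. -/
def hatExt (T : TwoFunctor Q) : ExtFamily T :=
  fun X Y φ => ((T.map φ.transpose).cograph).comp (T.map X.y).graph

/-- `λ_X = y_{PX} ∘ sup_{PX}`: the flat distributive law of `P` over itself. -/
def lamP (X : QCat Q) : QFun X.P.P X.P.P := (QCat.y X.P).comp (supP X)

/-- `λ†_X = ((y_X)_†)^! ∘ y_{P†PX}`: the strict distributive law of `P†` over `P`. -/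
def lamd (X : QCat Q) : QFun X.P.Pd X.Pd.P := (pshb (cpsf X.y)).comp (QCat.y X.P.Pd)

/-- `Λ_X = y_{PP†X} ∘ ((y_X)_†)^!`: the flat distributive law of `P P†` over `P`. -/
def LamPPd (X : QCat Q) : QFun X.P.Pd.P X.Pd.P.P := (QCat.y X.Pd.P).comp (pshb (cpsf X.y))

/-- The multiplication `S_X = s_{P†X} ∘ (y†_{PP†X})^!` of the double presheaf 2-monad. -/
def Smult (X : QCat Q) : QFun X.Pd.P.Pd.P X.Pd.P := (supP X.Pd).comp (pshb (QCat.yd X.Pd.P))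

/-- `Λ†_X = (y_X^!)^{†!} ∘ y_{P†PPX}`: the flat distributive law of `P† P` over `P`. -/
def LamPdP (X : QCat Q) : QFun X.P.P.Pd X.P.Pd.P :=
  (pshf (cpsf (supP X))).comp (QCat.y X.P.P.Pd)

/-- The multiplication `S†_X = s†_{PX} ∘ (y_{P†PX})^†` of the double copresheaf
2-monad. -/
def Sdmult (X : QCat Q) : QFun X.P.Pd.P.Pd X.P.Pd := (infPd X.P).comp (cpsb (QCat.y X.P.Pd))

/-- Pointwise infimum of a family of `Q`-functors into a presheaf `Q`-category. -/
def QFun.iInfP {ι : Type u} {Z X : QCat Q} (F : ι → QFun Z X.P) : QFun Z X.P where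
  app s z := ⟨fun p x => ⨅ i, ((F i).app s z).1 p x, by
    intro p q x x'
    refine le_iInf fun i => ?_
    exact le_trans
      (Quantaloid.comp_le_comp (iInf_le (fun i => ((F i).app s z).1 q x') i) le_rfl)
      (((F i).app s z).2 p q x x')⟩
  mono := by
    intro s s' z z'
    refine le_iInf fun p => le_iInf fun x => Quantaloid.le_lda.mp ?_
    refine le_iInf fun i => ?_
    have h1 : Q.comp (Z.hom s s' z z') (⨅ j, ((F j).app s z).1 p x)
        ≤ Q.comp (Z.hom s s' z z') (((F i).app s z).1 p x) :=
      Quantaloid.comp_le_comp le_rfl (iInf_le _ i)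
    have h2 : Q.comp (Z.hom s s' z z') (((F i).app s z).1 p x)
        ≤ ((F i).app s' z').1 p x :=
      Quantaloid.le_lda.mpr
        (le_trans ((F i).mono s s' z z') (le_trans (iInf_le _ p) (iInf_le _ x)))
    exact le_trans h1 h2

/-- The distributor `P†X ⇸ X` associated with a `Q`-functor `c : P†X → P†X`,
given by `φ(τ,x) = (c τ)(x)`; for a `Q`-closure operation `c` on `P†X` this realises
the correspondence `c = →φ` of Theorem `PPd_Alg`. -/
def intDist (X : QCat Q) (c : QFun X.Pd X.Pd) : QDist X.Pd X :=
  ⟨fun p q τ x => (c.app p τ).1 q x, by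
    intro p q τ x
    simp only [QRel.comp, Quantaloid.comp_iSup, Quantaloid.iSup_comp]
    refine iSup₂_le fun q' x' => iSup₂_le fun p' τ' => ?_
    have h1 : Q.comp ((c.app p' τ').1 q' x') (X.Pd.hom p p' τ τ')
        ≤ (c.app p τ).1 q' x' :=
      Quantaloid.le_rda.mpr
        (le_trans (c.mono p p' τ τ') (le_trans (iInf_le _ q') (iInf_le _ x')))
    have h2 : Q.comp (X.hom q' q x' x) ((c.app p τ).1 q' x') ≤ (c.app p τ).1 q x :=
      (c.app p τ).2 q' q x' x
    exact le_trans (Quantaloid.comp_le_comp le_rfl h1) h2⟩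

/-- The lax `Λ`-algebra structure `p = φ_⊙ : PP†X → PX` associated with a
`Q`-interior structure `c` on `X`. -/
def intAlg (X : QCat Q) (c : QFun X.Pd X.Pd) : QFun X.Pd.P X.P := (intDist X c).fwdr

/-- Laws (f) and (g) of a lax `Λ`-algebra, for the double presheaf 2-monad `𝔓𝔓†`
with its flat distributive law `Λ` over `𝔓`. -/
def IsAlgPPd (X : QCat Q) (p : QFun X.Pd.P X.P) : Prop :=
  X.y ≤ p.comp ((QCat.y X.Pd).comp X.yd) ∧
  (supP X).comp ((pshf p).comp ((LamPPd X).comp (pshf (cpsf p)))) ≤ p.comp (Smult X)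

/-!
A `Q`-functor `c : P†X → P†X` is the same thing as a distributor `φ : P†X ⇸ X`,
`φ(τ, x) = (c τ)(x)`, and the algebra attached to it is `p = φ_→`, i.e.
`(p S)(x) = PP†X(φ(-, x), S)`. Conversely `c` is read off `p` as
`(c τ)(x) = ⋀_S (p S)(x) ↘ S(τ)`, which recovers every `Q`-functor `c` from `intAlg c`.

For a lax algebra `p`, the unit law (f) makes this `c` shrink copresheaves. The
multiplication law (g), evaluated at the representable presheaf on the copresheaf
`S ↦ (p S)(x)`, gives `1 ≤ (p φ(-, x))(x)`, which forces `p = φ_→`; evaluated at the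
largest presheaf `Ξ` with `Ξ(y†(y τ)) ≤ S(c τ)` it gives idempotency of `c`.
Conversely the laws for `φ_→` follow from `(c τ)(x) ≤ τ(x)` and `c c = c`. Finally, the
lax homomorphism condition for `f` unwinds, through the adjunction `f^† ⊣ f_†`, to the
pointwise inequality `(d τ)(f x) ≤ (c (f^† τ))(x)`, which is continuity.
-/

namespace Quantaloid

variable {a b : Q.Obj}

theorem le_comp_of_idm_le_left {v : Q.Hom b b} (hv : Q.idm b ≤ v) (u : Q.Hom a b) :
    u ≤ Q.comp v u :=
  calc u = Q.comp (Q.idm b) u := (Q.idm_comp u).symm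
    _ ≤ Q.comp v u := comp_le_comp hv le_rfl

theorem le_comp_of_idm_le_right {u : Q.Hom a a} (hu : Q.idm a ≤ u) (v : Q.Hom a b) :
    v ≤ Q.comp v u :=
  calc v = Q.comp v (Q.idm a) := (Q.comp_idm v).symm
    _ ≤ Q.comp v u := comp_le_comp le_rfl hu

end Quantaloid

namespace QCat

variable (X : QCat Q)

theorem hom_le_hom_of_idm_le {p q : Q.Obj} {x : X.el p} {y z : X.el q}
    (h : Q.idm q ≤ X.hom q q y z) : X.hom p q x y ≤ X.hom p q x z :=
  (Quantaloid.le_comp_of_idm_le_left h _).trans (X.hom_comp_le x y z)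

theorem P_hom_comp_le {s s' p : Q.Obj} (σ : X.P.el s) (σ' : X.P.el s') (x : X.el p) :
    Q.comp (X.P.hom s s' σ σ') (σ.1 p x) ≤ σ'.1 p x :=
  Quantaloid.le_lda.mpr (iInf₂_le p x)

theorem le_P_hom {s s' : Q.Obj} {σ : X.P.el s} {σ' : X.P.el s'} {v : Q.Hom s s'}
    (h : ∀ p (x : X.el p), Q.comp v (σ.1 p x) ≤ σ'.1 p x) : v ≤ X.P.hom s s' σ σ' :=
  le_iInf₂ fun p x => Quantaloid.le_lda.mp (h p x)

theorem idm_le_P_hom_iff {s : Q.Obj} {σ σ' : X.P.el s} :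
    Q.idm s ≤ X.P.hom s s σ σ' ↔ ∀ p (x : X.el p), σ.1 p x ≤ σ'.1 p x :=
  ⟨fun h _ x => (Quantaloid.le_comp_of_idm_le_left h _).trans (X.P_hom_comp_le σ σ' x),
    fun h => X.le_P_hom fun p x => by rw [Q.idm_comp]; exact h p x⟩

theorem P_hom_y {p s : Q.Obj} (x : X.el p) (σ : X.P.el s) :
    X.P.hom p s (X.y.app p x) σ = σ.1 p x :=
  le_antisymm
    ((Quantaloid.le_comp_of_idm_le_right (X.refl p x) _).trans (X.P_hom_comp_le _ σ x))
    (X.le_P_hom fun _ x' => σ.2 _ p x' x)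

theorem comp_Pd_hom_le {s s' q : Q.Obj} (τ : X.Pd.el s) (τ' : X.Pd.el s') (x : X.el q) :
    Q.comp (τ'.1 q x) (X.Pd.hom s s' τ τ') ≤ τ.1 q x :=
  Quantaloid.le_rda.mpr (iInf₂_le q x)

theorem le_Pd_hom {s s' : Q.Obj} {τ : X.Pd.el s} {τ' : X.Pd.el s'} {u : Q.Hom s s'}
    (h : ∀ q (x : X.el q), Q.comp (τ'.1 q x) u ≤ τ.1 q x) : u ≤ X.Pd.hom s s' τ τ' :=
  le_iInf₂ fun q x => Quantaloid.le_rda.mp (h q x)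

theorem idm_le_Pd_hom_iff {s : Q.Obj} {τ τ' : X.Pd.el s} :
    Q.idm s ≤ X.Pd.hom s s τ τ' ↔ ∀ q (x : X.el q), τ'.1 q x ≤ τ.1 q x :=
  ⟨fun h _ x => (Quantaloid.le_comp_of_idm_le_right h _).trans (X.comp_Pd_hom_le τ τ' x),
    fun h => X.le_Pd_hom fun q x => by rw [Q.comp_idm]; exact h q x⟩

theorem Pd_hom_yd {s p : Q.Obj} (τ : X.Pd.el s) (x : X.el p) :
    X.Pd.hom s p τ (X.yd.app p x) = τ.1 p x :=
  le_antisymm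
    ((Quantaloid.le_comp_of_idm_le_left (X.refl p x) _).trans
      (X.comp_Pd_hom_le τ (X.yd.app p x) x))
    (X.le_Pd_hom fun q x' => τ.2 p q x x')

end QCat

namespace QFun

@[simp]
theorem comp_app {X Y Z : QCat Q} (g : QFun Y Z) (f : QFun X Y) {p : Q.Obj} (x : X.el p) :
    (g.comp f).app p x = g.app p (f.app p x) := rfl

theorem ext {X Y : QCat Q} {f g : QFun X Y} (h : ∀ p (x : X.el p), f.app p x = g.app p x) :
    f = g := by
  obtain ⟨fa, _⟩ := f
  obtain ⟨ga, _⟩ := g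
  obtain rfl : fa = ga := funext fun p => funext (h p)
  rfl

variable {Z X : QCat Q}

theorem ext_P {F G : QFun Z X.P}
    (h : ∀ s (z : Z.el s) q (x : X.el q), (F.app s z).1 q x = (G.app s z).1 q x) : F = G :=
  ext fun s z => Subtype.ext (funext fun q => funext (h s z q))

theorem ext_Pd {F G : QFun Z X.Pd}
    (h : ∀ s (z : Z.el s) q (x : X.el q), (F.app s z).1 q x = (G.app s z).1 q x) : F = G :=
  ext fun s z => Subtype.ext (funext fun q => funext (h s z q))

theorem le_P_iff {F G : QFun Z X.P} :
    F ≤ G ↔ ∀ s (z : Z.el s) q (x : X.el q), (F.app s z).1 q x ≤ (G.app s z).1 q x :=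
  forall₂_congr fun _ _ => X.idm_le_P_hom_iff

theorem le_Pd_iff {F G : QFun Z X.Pd} :
    F ≤ G ↔ ∀ s (z : Z.el s) q (x : X.el q), (G.app s z).1 q x ≤ (F.app s z).1 q x :=
  forall₂_congr fun _ _ => X.idm_le_Pd_hom_iff

theorem P_app_mono (F : QFun Z.P X.P) {s : Q.Obj} {σ σ' : Z.P.el s}
    (h : ∀ t (z : Z.el t), σ.1 t z ≤ σ'.1 t z) {q : Q.Obj} (x : X.el q) :
    (F.app s σ).1 q x ≤ (F.app s σ').1 q x :=
  X.idm_le_P_hom_iff.mp ((Z.idm_le_P_hom_iff.mpr h).trans (F.mono s s σ σ')) q x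

end QFun

section Functoriality

variable {X Y : QCat Q} (f : QFun X Y) {s t : Q.Obj}

theorem pshb_app (σ : Y.P.el s) {p : Q.Obj} (x : X.el p) :
    ((pshb f).app s σ).1 p x = σ.1 p (f.app p x) :=
  le_antisymm (iSup₂_le fun q y => σ.2 p q (f.app p x) y)
    ((Quantaloid.le_comp_of_idm_le_right (Y.refl p (f.app p x)) _).trans
      (le_iSup₂_of_le p (f.app p x) le_rfl))

theorem cpsb_app (τ : Y.Pd.el t) {q : Q.Obj} (x : X.el q) :
    ((cpsb f).app t τ).1 q x = τ.1 q (f.app q x) :=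
  le_antisymm (iSup₂_le fun p y => τ.2 p q y (f.app q x))
    ((Quantaloid.le_comp_of_idm_le_left (Y.refl q (f.app q x)) _).trans
      (le_iSup₂_of_le q (f.app q x) le_rfl))

theorem comp_hom_le_pshf_app (σ : X.P.el s) {p q : Q.Obj} (x : X.el q) (y : Y.el p) :
    Q.comp (σ.1 q x) (Y.hom p q y (f.app q x)) ≤ ((pshf f).app s σ).1 p y :=
  le_iSup₂_of_le q x le_rfl

theorem le_pshf_app (σ : X.P.el s) {q : Q.Obj} (x : X.el q) :
    σ.1 q x ≤ ((pshf f).app s σ).1 q (f.app q x) :=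
  (Quantaloid.le_comp_of_idm_le_right (Y.refl q (f.app q x)) _).trans
    (comp_hom_le_pshf_app f σ x _)

theorem le_cpsf_app (τ : X.Pd.el t) {q : Q.Obj} (x : X.el q) :
    τ.1 q x ≤ ((cpsf f).app t τ).1 q (f.app q x) :=
  (Quantaloid.le_comp_of_idm_le_left (Y.refl q (f.app q x)) _).trans
    (le_iSup₂_of_le q x le_rfl)

theorem pshf_y_app (a : X.el s) {p : Q.Obj} (y : Y.el p) :
    ((pshf f).app s (X.y.app s a)).1 p y = Y.hom p s y (f.app s a) :=
  le_antisymm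
    (iSup₂_le fun _ x =>
      (Quantaloid.comp_le_comp (f.mono _ s x a) le_rfl).trans (Y.hom_comp_le _ _ _))
    ((Quantaloid.le_comp_of_idm_le_left (X.refl s a) _).trans
      (comp_hom_le_pshf_app f (X.y.app s a) a y))

theorem cpsf_cpsb_app_le (τ : Y.Pd.el t) {q : Q.Obj} (y : Y.el q) :
    ((cpsf f).app t ((cpsb f).app t τ)).1 q y ≤ τ.1 q y :=
  iSup₂_le fun p x => by rw [cpsb_app]; exact τ.2 p q (f.app p x) y

theorem Pd_hom_cpsf_le {t' : Q.Obj} (τ : Y.Pd.el t) (τ' : X.Pd.el t') :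
    Y.Pd.hom t t' τ ((cpsf f).app t' τ') ≤ X.Pd.hom t t' ((cpsb f).app t τ) τ' :=
  ((cpsb f).mono t t' τ _).trans (X.Pd.hom_le_hom_of_idm_le
    (X.idm_le_Pd_hom_iff.mpr fun q x => by rw [cpsb_app]; exact le_cpsf_app f τ' x))

theorem app_cpsb_le_pshf_cpsf_app (S : X.Pd.P.el s) (τ : Y.Pd.el t) :
    S.1 t ((cpsb f).app t τ) ≤ ((pshf (cpsf f)).app s S).1 t τ :=
  (Quantaloid.le_comp_of_idm_le_right
      (Y.idm_le_Pd_hom_iff.mpr fun _ y => cpsf_cpsb_app_le f τ y) _).trans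
    (comp_hom_le_pshf_app (cpsf f) S _ τ)

theorem QDist.le_fwdr_app (φ : QDist X Y) {σ : X.P.el s} {q : Q.Obj} {y : Y.el q}
    {v : Q.Hom q s} (h : ∀ p (x : X.el p), Q.comp v (φ.rel p q x y) ≤ σ.1 p x) :
    v ≤ (φ.fwdr.app s σ).1 q y :=
  X.le_P_hom (σ := φ.transpose.app q y) h

theorem QFun.graph_fwdr_app_le (σ : X.P.el s) {q : Q.Obj} (x : X.el q) :
    (f.graph.fwdr.app s σ).1 q (f.app q x) ≤ σ.1 q x :=
  (Quantaloid.le_comp_of_idm_le_right (Y.refl q (f.app q x)) _).trans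
    (X.P_hom_comp_le (f.graph.transpose.app q (f.app q x)) σ x)

end Functoriality

theorem cpsf_y_app (X : QCat Q) {t s : Q.Obj} (τ : X.Pd.el t) (σ : X.P.el s) :
    ((cpsf X.y).app t τ).1 s σ = ⨆ q, ⨆ x : X.el q, Q.comp (σ.1 q x) (τ.1 q x) := by
  change (⨆ q, ⨆ x : X.el q, Q.comp (X.P.hom q s (X.y.app q x) σ) (τ.1 q x)) = _
  simp only [QCat.P_hom_y]

theorem Smult_app (X : QCat Q) {s t : Q.Obj} (Ξ : X.Pd.P.Pd.P.el s) (τ : X.Pd.el t) :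
    ((Smult X).app s Ξ).1 t τ = Ξ.1 t ((QCat.yd X.Pd.P).app t ((QCat.y X.Pd).app t τ)) :=
  (pshb_app _ _ τ).trans (pshb_app _ _ _)

theorem supP_comp_pshf_comp_y {Z X : QCat Q} (p : QFun Z X.P) :
    (supP X).comp ((pshf p).comp Z.y) = p :=
  QFun.ext_P fun s z q x => by
    simp only [QFun.comp_app, supP, pshb_app, pshf_y_app, QCat.P_hom_y]

/-- `((y_X)_†)^! · (p_†)_!`, so that law (g) of a lax `Λ`-algebra reads
`p · algMult X p ≤ p · S_X` (see `isAlgPPd_iff`). -/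
def algMult (X : QCat Q) (p : QFun X.Pd.P X.P) : QFun X.Pd.P.Pd.P X.Pd.P :=
  (pshb (cpsf X.y)).comp (pshf (cpsf p))

theorem isAlgPPd_iff {X : QCat Q} {p : QFun X.Pd.P X.P} :
    IsAlgPPd X p ↔
      (∀ q (x : X.el q) q' (x' : X.el q'),
        X.hom q' q x' x ≤ (p.app q ((QCat.y X.Pd).app q (X.yd.app q x))).1 q' x') ∧
      ∀ s (Ξ : X.Pd.P.Pd.P.el s) q (x : X.el q),
        (p.app s ((algMult X p).app s Ξ)).1 q x ≤ (p.app s ((Smult X).app s Ξ)).1 q x := by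
  have hmult : (supP X).comp ((pshf p).comp ((LamPPd X).comp (pshf (cpsf p))))
      = p.comp (algMult X p) :=
    congrArg (·.comp (algMult X p)) (supP_comp_pshf_comp_y p)
  rw [IsAlgPPd, hmult, QFun.le_P_iff, QFun.le_P_iff]
  rfl

section IntAlg

variable {X : QCat Q} {c : QFun X.Pd X.Pd} {s t q : Q.Obj}

theorem intAlg_app_comp_le (S : X.Pd.P.el s) (x : X.el q) (τ : X.Pd.el t) :
    Q.comp (((intAlg X c).app s S).1 q x) ((c.app t τ).1 q x) ≤ S.1 t τ :=
  X.Pd.P_hom_comp_le ((intDist X c).transpose.app q x) S τ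

theorem le_intAlg_app {S : X.Pd.P.el s} {x : X.el q} {v : Q.Hom q s}
    (h : ∀ t (τ : X.Pd.el t), Q.comp v ((c.app t τ).1 q x) ≤ S.1 t τ) :
    v ≤ ((intAlg X c).app s S).1 q x :=
  QDist.le_fwdr_app _ h

theorem idm_le_intAlg_app_transpose (x : X.el q) :
    Q.idm q ≤ ((intAlg X c).app q ((intDist X c).transpose.app q x)).1 q x :=
  X.Pd.P.refl q _

theorem IsClosureOp.app_app {Z : QCat Q} {e : QFun Z Z} (he : IsClosureOp Z e) (z : Z.el t) :
    e.app t (e.app t z) = e.app t z :=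
  congrArg (fun g => g.app t z) he.2

theorem IsClosureOp.Pd_app_le (hc : IsClosureOp X.Pd c) (τ : X.Pd.el t) (x : X.el q) :
    (c.app t τ).1 q x ≤ τ.1 q x :=
  QFun.le_Pd_iff.mp hc.1 t τ q x

theorem Pd_hom_cpsf_y_le {p : QFun X.Pd.P X.P} {τ τ' : X.Pd.el t}
    (h : ∀ s (S : X.Pd.P.el s) q (x : X.el q), Q.comp ((p.app s S).1 q x) (τ'.1 q x) ≤ S.1 t τ)
    {r : Q.Obj} (Θ : X.Pd.P.Pd.el r) :
    X.P.Pd.hom t r ((cpsf X.y).app t τ') ((cpsf p).app r Θ)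
      ≤ X.Pd.P.Pd.hom t r ((QCat.yd X.Pd.P).app t ((QCat.y X.Pd).app t τ)) Θ := by
  refine X.Pd.P.le_Pd_hom fun s S => ?_
  calc Q.comp (Θ.1 s S) (X.P.Pd.hom t r ((cpsf X.y).app t τ') ((cpsf p).app r Θ))
      ≤ Q.comp (((cpsf p).app r Θ).1 s (p.app s S))
          (X.P.Pd.hom t r ((cpsf X.y).app t τ') ((cpsf p).app r Θ)) :=
        Quantaloid.comp_le_comp (le_cpsf_app p Θ S) le_rfl
    _ ≤ ((cpsf X.y).app t τ').1 s (p.app s S) := X.P.comp_Pd_hom_le _ _ _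
    _ ≤ S.1 t τ := by rw [cpsf_y_app]; exact iSup₂_le (h s S)
    _ = X.Pd.P.hom t s ((QCat.y X.Pd).app t τ) S := (X.Pd.P_hom_y τ S).symm

theorem IsClosureOp.intAlg_unit_law (hc : IsClosureOp X.Pd c) (x : X.el q) {q' : Q.Obj}
    (x' : X.el q') :
    X.hom q' q x' x ≤ ((intAlg X c).app q ((QCat.y X.Pd).app q (X.yd.app q x))).1 q' x' :=
  le_intAlg_app fun _ τ =>
    (((c.app _ τ).2 q' q x' x).trans (hc.Pd_app_le τ x)).trans (X.Pd_hom_yd τ x).ge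

theorem IsClosureOp.intAlg_mult_law (hc : IsClosureOp X.Pd c) (Ξ : X.Pd.P.Pd.P.el s)
    (x : X.el q) :
    ((intAlg X c).app s ((algMult X (intAlg X c)).app s Ξ)).1 q x
      ≤ ((intAlg X c).app s ((Smult X).app s Ξ)).1 q x := by
  refine le_intAlg_app fun t τ => ?_
  rw [Smult_app, ← hc.app_app τ]
  refine (intAlg_app_comp_le _ x _).trans ?_
  rw [algMult, QFun.comp_app, pshb_app]
  exact iSup₂_le fun r Θ => (Quantaloid.comp_le_comp le_rfl
    (Pd_hom_cpsf_y_le (fun _ S _ x' => intAlg_app_comp_le S x' τ) Θ)).trans (Ξ.2 t r _ Θ)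

theorem IsClosureOp.isAlgPPd_intAlg (hc : IsClosureOp X.Pd c) : IsAlgPPd X (intAlg X c) :=
  isAlgPPd_iff.mpr
    ⟨fun _ x _ x' => hc.intAlg_unit_law x x', fun _ Ξ _ x => hc.intAlg_mult_law Ξ x⟩

end IntAlg

section IntOfAlg

def intOfAlg (X : QCat Q) (p : QFun X.Pd.P X.P) : QFun X.Pd X.Pd where
  app t τ := ⟨fun q x => ⨅ s, ⨅ S : X.Pd.P.el s, Quantaloid.rda ((p.app s S).1 q x) (S.1 t τ),
    fun q q' x x' => le_iInf₂ fun s S => Quantaloid.le_rda.mp <| by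
      rw [← Q.comp_assoc]
      exact (Quantaloid.comp_le_comp ((p.app s S).2 q q' x x') le_rfl).trans
        (Quantaloid.le_rda.mpr (iInf₂_le s S))⟩
  mono t t' τ τ' := X.le_Pd_hom fun q x => le_iInf₂ fun s S => Quantaloid.le_rda.mp <| by
    rw [← Q.comp_assoc]
    exact (Quantaloid.comp_le_comp (Quantaloid.le_rda.mpr (iInf₂_le s S)) le_rfl).trans
      (S.2 t t' τ τ')

variable {X : QCat Q} {s t q : Q.Obj} (p : QFun X.Pd.P X.P)

theorem comp_intOfAlg_app_le (S : X.Pd.P.el s) (τ : X.Pd.el t) (x : X.el q) :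
    Q.comp ((p.app s S).1 q x) (((intOfAlg X p).app t τ).1 q x) ≤ S.1 t τ :=
  Quantaloid.le_rda.mpr (iInf₂_le s S)

theorem le_intOfAlg_app {τ : X.Pd.el t} {x : X.el q} {u : Q.Hom t q}
    (h : ∀ s (S : X.Pd.P.el s), Q.comp ((p.app s S).1 q x) u ≤ S.1 t τ) :
    u ≤ ((intOfAlg X p).app t τ).1 q x :=
  le_iInf₂ fun s S => Quantaloid.le_rda.mp (h s S)

theorem intOfAlg_intAlg (c : QFun X.Pd X.Pd) : intOfAlg X (intAlg X c) = c :=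
  QFun.ext_Pd fun _ τ _ x => le_antisymm
    ((Quantaloid.le_comp_of_idm_le_left (idm_le_intAlg_app_transpose x) _).trans
      (comp_intOfAlg_app_le _ _ τ x))
    (le_intOfAlg_app _ fun _ S => intAlg_app_comp_le S x τ)

def evalCopresheaf (x : X.el q) : X.Pd.P.Pd.el q :=
  (cpsb p).app q ((QCat.yd X.P).app q (X.y.app q x))

theorem evalCopresheaf_app (x : X.el q) (S : X.Pd.P.el s) :
    (evalCopresheaf p x).1 s S = (p.app s S).1 q x := by
  rw [evalCopresheaf, cpsb_app]
  exact X.P_hom_y x (p.app s S)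

theorem y_yd_app_le_algMult_app (x : X.el q) (τ : X.Pd.el t) :
    ((QCat.y X.Pd).app q (X.yd.app q x)).1 t τ
      ≤ ((algMult X p).app q ((QCat.y X.Pd.P.Pd).app q (evalCopresheaf p x))).1 t τ := by
  rw [algMult, QFun.comp_app, pshb_app, pshf_y_app]
  refine (X.Pd_hom_yd τ x).trans_le (X.P.le_Pd_hom fun s σ => ?_)
  calc Q.comp (((cpsf p).app q (evalCopresheaf p x)).1 s σ) (τ.1 q x)
      ≤ Q.comp (σ.1 q x) (τ.1 q x) := by
        refine Quantaloid.comp_le_comp ((cpsf_cpsb_app_le p _ σ).trans ?_) le_rfl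
        exact (X.P_hom_y x σ).le
    _ ≤ ((cpsf X.y).app t τ).1 s σ := by rw [cpsf_y_app]; exact le_iSup₂_of_le q x le_rfl

theorem Smult_app_le_intOfAlg_app (x : X.el q) (τ : X.Pd.el t) :
    ((Smult X).app q ((QCat.y X.Pd.P.Pd).app q (evalCopresheaf p x))).1 t τ
      ≤ ((intOfAlg X p).app t τ).1 q x := by
  rw [Smult_app]
  refine le_intOfAlg_app p fun s S => ?_
  rw [← evalCopresheaf_app p x S, ← X.Pd.P_hom_y τ S]
  exact X.Pd.P.comp_Pd_hom_le _ _ S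

theorem Pd_hom_le_Pd_hom_intOfAlg {t' : Q.Obj} (τ : X.Pd.el t) (τ' : X.Pd.el t') :
    X.Pd.P.Pd.hom t' t ((QCat.yd X.Pd.P).app t' ((QCat.y X.Pd).app t' τ'))
        ((cpsb p).app t ((cpsf X.y).app t τ))
      ≤ X.Pd.hom t' t ((intOfAlg X p).app t' τ') τ := by
  refine X.le_Pd_hom fun q x => le_intOfAlg_app p fun s S => ?_
  rw [← Q.comp_assoc, ← X.Pd.P_hom_y τ' S]
  refine (Quantaloid.comp_le_comp ?_ le_rfl).trans (X.Pd.P.comp_Pd_hom_le _ _ S)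
  rw [cpsb_app, cpsf_y_app]
  exact le_iSup₂_of_le q x le_rfl

variable {p}

theorem IsAlgPPd.intOfAlg_app_le (hp : IsAlgPPd X p) (τ : X.Pd.el t) (x : X.el q) :
    ((intOfAlg X p).app t τ).1 q x ≤ τ.1 q x :=
  (Quantaloid.le_comp_of_idm_le_left
      ((X.refl q x).trans ((isAlgPPd_iff.mp hp).1 q x q x)) _).trans
    ((comp_intOfAlg_app_le p _ τ x).trans (X.Pd_hom_yd τ x).le)

theorem IsAlgPPd.idm_le_app_transpose (hp : IsAlgPPd X p) (x : X.el q) :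
    Q.idm q ≤ (p.app q ((intDist X (intOfAlg X p)).transpose.app q x)).1 q x := by
  obtain ⟨hunit, hmult⟩ := isAlgPPd_iff.mp hp
  set Ξ := (QCat.y X.Pd.P.Pd).app q (evalCopresheaf p x)
  calc Q.idm q ≤ X.hom q q x x := X.refl q x
    _ ≤ (p.app q ((QCat.y X.Pd).app q (X.yd.app q x))).1 q x := hunit q x q x
    _ ≤ (p.app q ((algMult X p).app q Ξ)).1 q x :=
        p.P_app_mono (fun _ τ => y_yd_app_le_algMult_app p x τ) x
    _ ≤ (p.app q ((Smult X).app q Ξ)).1 q x := hmult q Ξ q x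
    _ ≤ _ := p.P_app_mono (fun _ τ => Smult_app_le_intOfAlg_app p x τ) x

theorem IsAlgPPd.intAlg_intOfAlg (hp : IsAlgPPd X p) : intAlg X (intOfAlg X p) = p :=
  QFun.ext_P fun s S q x => le_antisymm
    ((Quantaloid.le_comp_of_idm_le_right (hp.idm_le_app_transpose x) _).trans
      ((Quantaloid.comp_le_comp
        (p.mono q s ((intDist X (intOfAlg X p)).transpose.app q x) S) le_rfl).trans
        (X.P_hom_comp_le _ _ x)))
    (le_intAlg_app fun _ τ => comp_intOfAlg_app_le p S τ x)

theorem IsAlgPPd.intOfAlg_app_app (hp : IsAlgPPd X p) (τ : X.Pd.el t) (x : X.el q) :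
    ((intOfAlg X p).app t ((intOfAlg X p).app t τ)).1 q x = ((intOfAlg X p).app t τ).1 q x := by
  refine le_antisymm (hp.intOfAlg_app_le _ x) (le_intOfAlg_app p fun s S => ?_)
  set c := intOfAlg X p
  set g := (QCat.yd X.Pd.P).comp (QCat.y X.Pd)
  -- the largest presheaf on `P†PP†X` with `Ξ(g τ') ≤ S(c τ')`
  set Ξ := g.graph.fwdr.app s ((pshb c).app s S)
  have hS : ∀ t₀ (τ₀ : X.Pd.el t₀), S.1 t₀ τ₀ ≤ ((algMult X p).app s Ξ).1 t₀ τ₀ :=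
    fun t₀ τ₀ => calc
      S.1 t₀ τ₀ ≤ Ξ.1 t₀ ((cpsb p).app t₀ ((cpsf X.y).app t₀ τ₀)) :=
        QDist.le_fwdr_app _ fun _ τ' => by
          rw [pshb_app]
          exact (Quantaloid.comp_le_comp le_rfl (Pd_hom_le_Pd_hom_intOfAlg p τ₀ τ')).trans
            (S.2 _ t₀ _ τ₀)
      _ ≤ ((pshf (cpsf p)).app s Ξ).1 t₀ ((cpsf X.y).app t₀ τ₀) :=
        app_cpsb_le_pshf_cpsf_app p Ξ _
      _ = ((algMult X p).app s Ξ).1 t₀ τ₀ := (pshb_app _ _ τ₀).symm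
  calc Q.comp ((p.app s S).1 q x) ((c.app t τ).1 q x)
      ≤ Q.comp ((p.app s ((Smult X).app s Ξ)).1 q x) ((c.app t τ).1 q x) :=
        Quantaloid.comp_le_comp
          ((p.P_app_mono hS x).trans ((isAlgPPd_iff.mp hp).2 s Ξ q x)) le_rfl
    _ ≤ Ξ.1 t (g.app t τ) := (comp_intOfAlg_app_le p _ τ x).trans (Smult_app X Ξ τ).le
    _ ≤ ((pshb c).app s S).1 t τ := g.graph_fwdr_app_le _ τ
    _ = S.1 t (c.app t τ) := pshb_app c S τ

theorem IsAlgPPd.isClosureOp_intOfAlg (hp : IsAlgPPd X p) : IsClosureOp X.Pd (intOfAlg X p) :=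
  ⟨QFun.le_Pd_iff.mpr fun _ τ _ x => hp.intOfAlg_app_le τ x,
    QFun.ext_Pd fun _ τ _ x => hp.intOfAlg_app_app τ x⟩

theorem IsAlgPPd.existsUnique_intAlg_eq (hp : IsAlgPPd X p) :
    ∃! c : QFun X.Pd X.Pd, IsClosureOp X.Pd c ∧ intAlg X c = p :=
  ⟨intOfAlg X p, ⟨hp.isClosureOp_intOfAlg, hp.intAlg_intOfAlg⟩,
    fun c ⟨_, hc⟩ => by rw [← hc, intOfAlg_intAlg]⟩

end IntOfAlg

section Continuity

variable {X Y : QCat Q} {c : QFun X.Pd X.Pd} {d : QFun Y.Pd Y.Pd} {f : QFun X Y}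

theorem comp_cpsb_le_cpsb_comp_iff :
    c.comp (cpsb f) ≤ (cpsb f).comp d ↔
      ∀ t (τ : Y.Pd.el t) q (x : X.el q),
        (d.app t τ).1 q (f.app q x) ≤ (c.app t ((cpsb f).app t τ)).1 q x := by
  simp only [QFun.le_Pd_iff, QFun.comp_app, cpsb_app]

theorem app_le_app_cpsb_of_laxHom
    (h : (pshf f).comp (intAlg X c) ≤ (intAlg Y d).comp (pshf (cpsf f)))
    {t q : Q.Obj} (τ : Y.Pd.el t) (x : X.el q) :
    (d.app t τ).1 q (f.app q x) ≤ (c.app t ((cpsb f).app t τ)).1 q x := by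
  set σ := (intDist X c).transpose.app q x
  have hσ : Q.idm q ≤ ((intAlg Y d).app q ((pshf (cpsf f)).app q σ)).1 q (f.app q x) :=
    (idm_le_intAlg_app_transpose x).trans
      ((le_pshf_app f _ x).trans (QFun.le_P_iff.mp h q σ q (f.app q x)))
  refine (Quantaloid.le_comp_of_idm_le_left hσ _).trans ((intAlg_app_comp_le _ _ τ).trans ?_)
  exact iSup₂_le fun t' τ' =>
    (Quantaloid.comp_le_comp le_rfl (Pd_hom_cpsf_le f τ τ')).trans (σ.2 t t' _ τ')

theorem laxHom_of_app_le_app_cpsb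
    (h : ∀ t (τ : Y.Pd.el t) q (x : X.el q),
      (d.app t τ).1 q (f.app q x) ≤ (c.app t ((cpsb f).app t τ)).1 q x) :
    (pshf f).comp (intAlg X c) ≤ (intAlg Y d).comp (pshf (cpsf f)) :=
  QFun.le_P_iff.mpr fun s S q' y => iSup₂_le fun q x => le_intAlg_app fun t τ => by
    rw [Q.comp_assoc]
    calc Q.comp (((intAlg X c).app s S).1 q x)
          (Q.comp (Y.hom q' q y (f.app q x)) ((d.app t τ).1 q' y))
        ≤ Q.comp (((intAlg X c).app s S).1 q x) ((c.app t ((cpsb f).app t τ)).1 q x) :=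
          Quantaloid.comp_le_comp le_rfl (((d.app t τ).2 q' q y _).trans (h t τ q x))
      _ ≤ S.1 t ((cpsb f).app t τ) := intAlg_app_comp_le S x _
      _ ≤ ((pshf (cpsf f)).app s S).1 t τ := app_cpsb_le_pshf_cpsf_app f S τ

theorem laxHom_intAlg_iff_continuous :
    (pshf f).comp (intAlg X c) ≤ (intAlg Y d).comp (pshf (cpsf f)) ↔
      c.comp (cpsb f) ≤ (cpsb f).comp d := by
  rw [comp_cpsb_le_cpsb_comp_iff]
  exact ⟨fun h _ τ _ x => app_le_app_cpsb_of_laxHom h τ x, laxHom_of_app_le_app_cpsb⟩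

end Continuity

/-- for the flat distributive law `Λ` of `𝔓𝔓†` over `𝔓`,
`(Λ,Q)-Alg ≅ Q-Int`: lax `Λ`-algebra structures `p : PP†X → PX` correspond
bijectively to `Q`-closure operations on `P†X` (i.e. `Q`-interior structures), and
lax `Λ`-homomorphisms are exactly the continuous `Q`-functors of `Q`-interior
spaces. -/
theorem statement11 (Q : Quantaloid.{u}) :
    (∀ (X : QCat Q) (c : QFun X.Pd X.Pd), IsClosureOp X.Pd c → IsAlgPPd X (intAlg X c)) ∧
    (∀ (X : QCat Q) (p : QFun X.Pd.P X.P), IsAlgPPd X p →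
      ∃! c : QFun X.Pd X.Pd, IsClosureOp X.Pd c ∧ intAlg X c = p) ∧
    (∀ (X Y : QCat Q) (c : QFun X.Pd X.Pd) (d : QFun Y.Pd Y.Pd) (f : QFun X Y),
      IsClosureOp X.Pd c → IsClosureOp Y.Pd d →
      ((pshf f).comp (intAlg X c) ≤ (intAlg Y d).comp (pshf (cpsf f)) ↔
        c.comp (cpsb f) ≤ (cpsb f).comp d)) :=
  ⟨fun _ _ hc => hc.isAlgPPd_intAlg, fun _ _ hp => hp.existsUnique_intAlg_eq,
    fun _ _ _ _ _ _ _ => laxHom_intAlg_iff_continuous⟩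

end QT
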